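/- arXiv:2006.12785 — 2 statements merged into one kernel-verified Lean document; each statement's English description precedes it below -/
import Mathlib

section
/- Exact Fourier identity for the first filtered integral: for sufficiently regular functions $v, w$ on $\mathbb{T}$, $\int_0^\tau e^{-is\partial_x^2}\big[(e^{is\partial_x^2}v)\, e^{is\partial_x^2}|w|^2\big] ds = \frac{i}{2} e^{-i\tau\partial_x^2}\big[(e^{i\tau\partial_x^2}\partial_x^{-1}v)\, e^{i\tau\partial_x^2}\partial_x^{-1}|w|^2\big] - \frac{i}{2}(\partial_x^{-1}v)\,\partial_x^{-1}|w|^2 + \tau \hat{v}_0 |w|^2 + \tau \widehat{(|w|^2)}_0 (v - \hat{v}_0)$. -/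
/-!
On the Fourier side the integrand is a sum over interactions `j + (k - j) = k`, and by
`k² - j² - (k - j)² = 2 j (k - j)` the phase of the `j`-th interaction is `exp (2 i j (k - j) s)`.
For non-resonant pairs (`j (k - j) ≠ 0`) it integrates to `(i/2) (exp (2 i j (k - j) τ) - 1)`
times the product of the coefficients of `∂ₓ⁻¹ v` and `∂ₓ⁻¹ |w|²`; the resonant pairs `j = 0`
and `j = k` contribute `τ` times the product of the coefficients themselves. Since `v̂ ∈ ℓ¹` and
the coefficients of `|w|²` are bounded, summation and integration can be exchanged.
-/

/-- Japanese bracket. -/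
noncomputable def jap (x : ℝ) : ℝ := Real.sqrt (1 + x ^ 2)

/-- A function on `𝕋` is represented by its Fourier coefficients `c : ℤ → ℂ`.
`pc a b` is the Fourier coefficient sequence of the pointwise product. -/
noncomputable def pc (a b : ℤ → ℂ) : ℤ → ℂ := fun k => ∑' j : ℤ, a j * b (k - j)

/-- Fourier coefficients of the complex conjugate function. -/
noncomputable def cconj (c : ℤ → ℂ) : ℤ → ℂ := fun k => starRingEnd ℂ (c (-k))

/-- Fourier coefficients of `e^{it∂ₓ²} f` (multiplication by `e^{-itk²}`). -/
noncomputable def eS (t : ℝ) (c : ℤ → ℂ) : ℤ → ℂ :=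
  fun k => Complex.exp (-(Complex.I) * t * (k : ℝ) ^ 2) * c k

/-- Fourier coefficients of `∂ₓ⁻¹ f = ∑_{k≠0} (ik)⁻¹ f̂ₖ e^{ikx}`. -/
noncomputable def pinv (c : ℤ → ℂ) : ℤ → ℂ :=
  fun k => if k = 0 then 0 else c k / (Complex.I * k)

/-- Fourier coefficients of `∂ₓ f`. -/
noncomputable def dx (c : ℤ → ℂ) : ℤ → ℂ := fun k => Complex.I * k * c k

/-- Fourier coefficients of `∂ₓ² f`. -/
noncomputable def dx2 (c : ℤ → ℂ) : ℤ → ℂ := fun k => (Complex.I * k) ^ 2 * c k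

/-- "Sufficiently regular": Fourier coefficients decay faster than any polynomial. -/
def Regular (c : ℤ → ℂ) : Prop :=
  ∀ j : ℕ, Summable fun k : ℤ => jap k ^ (j : ℝ) * ‖c k‖

open Complex

theorem intervalIntegral.integral_tsum_of_norm_le {ι E : Type*} [Countable ι]
    [NormedAddCommGroup E] [NormedSpace ℝ E] [CompleteSpace E] {F : ι → ℝ → E} {c : ι → ℝ}
    (hF : ∀ i, Continuous (F i)) (hFc : ∀ i t, ‖F i t‖ ≤ c i) (hc : Summable c) (a b : ℝ) :
    ∫ t in a..b, ∑' i, F i t = ∑' i, ∫ t in a..b, F i t :=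
  (intervalIntegral.hasSum_integral_of_dominated_convergence (fun i _ => c i)
    (fun i => (hF i).aestronglyMeasurable) (fun i => MeasureTheory.ae_of_all _ fun t _ => hFc i t)
    (MeasureTheory.ae_of_all _ fun _ _ => hc) intervalIntegrable_const
    (MeasureTheory.ae_of_all _ fun t _ => (hc.of_norm_bounded (hFc · t)).hasSum)).tsum_eq.symm

theorem integral_exp_two_mul_I_int_mul (n : ℤ) (τ : ℝ) :
    ∫ s in (0 : ℝ)..τ, exp (2 * I * n * s) =
      if n = 0 then (τ : ℂ) else (exp (2 * I * n * τ) - 1) / (2 * I * n) := by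
  split_ifs with hn
  · simp [hn]
  · rw [integral_exp_mul_complex (by simp [hn, I_ne_zero])]
    simp

section FourierCoefficients

variable {a b : ℤ → ℂ}

theorem Regular.summable_norm (ha : Regular a) : Summable (‖a ·‖) := by
  simpa [jap] using ha 0

theorem norm_cconj (c : ℤ → ℂ) (n : ℤ) : ‖cconj c n‖ = ‖c (-n)‖ := by
  simp [cconj]

theorem norm_pinv_le (c : ℤ → ℂ) (n : ℤ) : ‖pinv c n‖ ≤ ‖c n‖ := by
  rcases eq_or_ne n 0 with rfl | hn
  · simp [pinv]
  · rw [pinv, if_neg hn, norm_div, norm_mul, norm_I, one_mul, norm_intCast]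
    exact div_le_self (norm_nonneg _) (mod_cast Int.one_le_abs hn)

theorem norm_exp_I_mul_mul_sq (s x : ℝ) : ‖exp (I * s * x ^ 2)‖ = 1 := by
  rw [show I * s * x ^ 2 = I * ((s * x ^ 2 : ℝ) : ℂ) by push_cast; ring, norm_exp_I_mul_ofReal]

theorem norm_eS (t : ℝ) (c : ℤ → ℂ) (n : ℤ) : ‖eS t c n‖ = ‖c n‖ := by
  rw [eS, norm_mul, show -I * t * ((n : ℝ) : ℂ) ^ 2 = I * (-t : ℝ) * ((n : ℝ) : ℂ) ^ 2 by
    push_cast; ring, norm_exp_I_mul_mul_sq, one_mul]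

theorem summable_norm_mul_sub {C : ℝ} (ha : Summable (‖a ·‖)) (hb : ∀ n, ‖b n‖ ≤ C) (k : ℤ) :
    Summable fun j => ‖a j * b (k - j)‖ :=
  (ha.mul_right C).of_nonneg_of_le (fun _ => norm_nonneg _) fun j => by
    rw [norm_mul]
    exact mul_le_mul_of_nonneg_left (hb _) (norm_nonneg _)

theorem norm_pc_le {C : ℝ} (ha : Summable (‖a ·‖)) (hb : ∀ n, ‖b n‖ ≤ C) (k : ℤ) :
    ‖pc a b k‖ ≤ (∑' j, ‖a j‖) * C :=
  calc ‖pc a b k‖ ≤ ∑' j, ‖a j * b (k - j)‖ :=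
        norm_tsum_le_tsum_norm (summable_norm_mul_sub ha hb k)
    _ ≤ ∑' j, ‖a j‖ * C :=
        (summable_norm_mul_sub ha hb k).tsum_le_tsum
          (fun j => by rw [norm_mul]; gcongr; exact hb _) (ha.mul_right C)
    _ = (∑' j, ‖a j‖) * C := tsum_mul_right

theorem exp_mul_eS_mul_eS (s : ℝ) (k j : ℤ) :
    exp (I * s * (k : ℝ) ^ 2) * (eS s a j * eS s b (k - j)) =
      exp (2 * I * (j * (k - j) : ℤ) * s) * (a j * b (k - j)) := by
  have hphase : I * s * (k : ℝ) ^ 2 + (-I * s * (j : ℝ) ^ 2 + -I * s * ((k - j : ℤ) : ℝ) ^ 2) =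
      2 * I * (j * (k - j) : ℤ) * s := by
    push_cast
    ring
  simp only [eS]
  rw [← hphase, exp_add, exp_add]
  ring

theorem pinv_mul_pinv (j l : ℤ) :
    pinv a j * pinv b l = if j * l = 0 then 0 else -(a j * b l) / (j * l : ℤ) := by
  rcases eq_or_ne j 0 with rfl | hj
  · simp [pinv]
  rcases eq_or_ne l 0 with rfl | hl
  · simp [pinv]
  simp only [pinv, mul_eq_zero, hj, hl, or_self, if_false]
  field_simp
  push_cast
  ring_nf
  rw [I_sq]
  ring

theorem integral_exp_mul_eS_mul_eS (τ : ℝ) (k j : ℤ) :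
    ∫ s in (0 : ℝ)..τ, exp (I * s * (k : ℝ) ^ 2) * (eS s a j * eS s b (k - j)) =
      I / 2 * exp (I * τ * (k : ℝ) ^ 2) * (eS τ (pinv a) j * eS τ (pinv b) (k - j))
        - I / 2 * (pinv a j * pinv b (k - j))
        + τ * (if j * (k - j) = 0 then a j * b (k - j) else 0) := by
  simp only [exp_mul_eS_mul_eS]
  rw [mul_assoc (I / 2), exp_mul_eS_mul_eS, intervalIntegral.integral_mul_const,
    integral_exp_two_mul_I_int_mul, pinv_mul_pinv]
  split_ifs with h
  · simp
  · field_simp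
    ring_nf
    rw [I_sq]
    ring

theorem tsum_ite_mul_sub_eq_zero (k : ℤ) :
    ∑' j : ℤ, (if j * (k - j) = 0 then a j * b (k - j) else 0) =
      a 0 * b k + if k = 0 then 0 else a k * b 0 := by
  rcases eq_or_ne k 0 with rfl | hk
  · simp
  · rw [tsum_eq_sum (s := {0, k}), Finset.sum_pair hk.symm]
    · simp [hk]
    · intro j hj
      simp only [Finset.mem_insert, Finset.mem_singleton, not_or] at hj
      simp [hj.1, sub_ne_zero.mpr (Ne.symm hj.2)]

theorem integral_exp_mul_pc_eS {C : ℝ} (ha : Summable (‖a ·‖)) (hb : ∀ n, ‖b n‖ ≤ C)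
    (τ : ℝ) (k : ℤ) :
    ∫ s in (0 : ℝ)..τ, exp (I * s * (k : ℝ) ^ 2) * pc (eS s a) (eS s b) k =
      I / 2 * exp (I * τ * (k : ℝ) ^ 2) * pc (eS τ (pinv a)) (eS τ (pinv b)) k
        - I / 2 * pc (pinv a) (pinv b) k
        + τ * (a 0 * b k + if k = 0 then 0 else a k * b 0) := by
  have hab := summable_norm_mul_sub ha hb k
  have hpinv_a : Summable fun j => ‖pinv a j‖ :=
    ha.of_nonneg_of_le (fun _ => norm_nonneg _) (norm_pinv_le a)
  have hpinv_b (n : ℤ) : ‖pinv b n‖ ≤ C := (norm_pinv_le b n).trans (hb n)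
  have hsum_τ : Summable fun j => eS τ (pinv a) j * eS τ (pinv b) (k - j) :=
    (summable_norm_mul_sub (a := eS τ (pinv a)) (by simpa only [norm_eS] using hpinv_a)
      (fun n => (norm_eS τ _ n).trans_le (hpinv_b n)) k).of_norm
  have hsum_0 : Summable fun j => pinv a j * pinv b (k - j) :=
    (summable_norm_mul_sub hpinv_a hpinv_b k).of_norm
  have hres : Summable fun j => (τ : ℂ) * if j * (k - j) = 0 then a j * b (k - j) else 0 := by
    refine .mul_left _ (hab.of_norm_bounded fun j => ?_)
    split_ifs
    exacts [le_rfl, norm_zero.trans_le (norm_nonneg _)]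
  calc _ = ∑' j, ∫ s in (0 : ℝ)..τ, exp (I * s * (k : ℝ) ^ 2) * (eS s a j * eS s b (k - j)) := by
        simp only [pc, ← tsum_mul_left]
        refine intervalIntegral.integral_tsum_of_norm_le (fun j => by simp only [eS]; fun_prop)
          (fun j s => ?_) hab 0 τ
        rw [norm_mul, norm_exp_I_mul_mul_sq, one_mul, norm_mul, norm_mul, norm_eS, norm_eS]
    _ = _ := by
        rw [tsum_congr fun j => integral_exp_mul_eS_mul_eS τ k j,
          ((hsum_τ.mul_left _).sub (hsum_0.mul_left _)).tsum_add hres,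
          (hsum_τ.mul_left _).tsum_sub (hsum_0.mul_left _), tsum_mul_left, tsum_mul_left,
          tsum_mul_left, tsum_ite_mul_sub_eq_zero]
        rfl

end FourierCoefficients

theorem first_filtered_integral_identity_general (τ : ℝ)
    (v w : ℤ → ℂ) (hv : Regular v) (hw : Regular w) :
    ∀ k : ℤ,
      (∫ s in (0 : ℝ)..τ,
          Complex.exp (Complex.I * s * (k : ℝ) ^ 2) *
            pc (eS s v) (eS s (pc w (cconj w))) k) =
        Complex.I / 2 * Complex.exp (Complex.I * τ * (k : ℝ) ^ 2) *
            pc (eS τ (pinv v)) (eS τ (pinv (pc w (cconj w)))) k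
          - Complex.I / 2 * pc (pinv v) (pinv (pc w (cconj w))) k
          + (τ : ℂ) * v 0 * pc w (cconj w) k
          + (τ : ℂ) * pc w (cconj w) 0 * (if k = 0 then 0 else v k) := by
  intro k
  have hw1 := hw.summable_norm
  have hm (n : ℤ) : ‖pc w (cconj w) n‖ ≤ (∑' j, ‖w j‖) * ∑' j, ‖w j‖ :=
    norm_pc_le hw1 (fun n => (norm_cconj w n).trans_le
      (hw1.le_tsum (-n) fun _ _ => norm_nonneg _)) n
  rw [integral_exp_mul_pc_eS hv.summable_norm hm]
  split_ifs <;> ring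

/-- **Exact Fourier identity for the first filtered integral:** for sufficiently
regular `v, w` on `𝕋` (identified with their Fourier coefficients) one has, mode by
mode,
`∫₀^τ e^{-is∂ₓ²}[(e^{is∂ₓ²}v) e^{is∂ₓ²}|w|²] ds
  = (i/2) e^{-iτ∂ₓ²}[(e^{iτ∂ₓ²}∂ₓ⁻¹v)(e^{iτ∂ₓ²}∂ₓ⁻¹|w|²)] - (i/2)(∂ₓ⁻¹v)(∂ₓ⁻¹|w|²)
    + τ v̂₀ |w|² + τ (|w|²)^₀ (v - v̂₀)`. -/
theorem first_filtered_integral_identity (τ : ℝ) (hτ : 0 < τ)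
    (v w : ℤ → ℂ) (hv : Regular v) (hw : Regular w) :
    ∀ k : ℤ,
      (∫ s in (0 : ℝ)..τ,
          Complex.exp (Complex.I * s * (k : ℝ) ^ 2) *
            pc (eS s v) (eS s (pc w (cconj w))) k) =
        Complex.I / 2 * Complex.exp (Complex.I * τ * (k : ℝ) ^ 2) *
            pc (eS τ (pinv v)) (eS τ (pinv (pc w (cconj w)))) k
          - Complex.I / 2 * pc (pinv v) (pinv (pc w (cconj w))) k
          + (τ : ℂ) * v 0 * pc w (cconj w) k
          + (τ : ℂ) * pc w (cconj w) 0 * (if k = 0 then 0 else v k) :=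
  first_filtered_integral_identity_general τ v w hv hw
end

section
/- Commutator identity for the modulus squared under the Schrödinger flow: for a sufficiently regular function $w$ on $\mathbb{T}$ and $s \in \mathbb{R}$, $|e^{is\partial_x^2}w|^2 - e^{is\partial_x^2}(|w|^2) = -2i\int_0^s e^{i(s-s_1)\partial_x^2}\big[(e^{-is_1\partial_x^2}\partial_x^2\overline{w})(e^{is_1\partial_x^2}w) + |e^{is_1\partial_x^2}\partial_x w|^2\big]\, ds_1$. -/
/-! Fix the output mode `k` and put `c j = ŵ j * conj (ŵ (j - k))`. Every term of the identity is a
series in `c j`: the free phases combine into `e^{-isk²} e^{isβ}` with the resonance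
`β = (j - k)² + k² - j² = 2k(k - j)`, and on the right the two products carry the same phase with
total symbol `-β / 2`. Mode by mode the identity is then `e^{isβ} - 1 = ∫₀ˢ iβ e^{itβ} dt`, and the
series may be integrated termwise because `∑ |β j| ‖c j‖ < ∞` for regular `w`. -/

open Complex

lemma norm_exp_I_mul_ofReal_mul (r t : ℝ) : ‖exp (I * r * t)‖ = 1 := by
  simp [norm_exp]

lemma tsum_exp_sub_one_mul_eq_integral_tsum {ι : Type*} [Countable ι] (β : ι → ℝ) (a : ι → ℂ)
    (h : Summable fun i => |β i| * ‖a i‖) (s : ℝ) :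
    ∑' i, (exp (I * β i * s) - 1) * a i
      = ∫ t in (0 : ℝ)..s, ∑' i, I * β i * a i * exp (I * β i * t) := by
  have hterm : ∀ i, ∫ t in (0 : ℝ)..s, I * β i * a i * exp (I * β i * t)
      = (exp (I * β i * s) - 1) * a i := by
    intro i
    rw [intervalIntegral.integral_eq_sub_of_hasDerivAt
      (f := fun t : ℝ => exp (I * β i * t) * a i) (fun t _ => ?_)
      (Continuous.intervalIntegrable (by fun_prop) _ _)]
    · simp [sub_mul]
    · exact ((((hasDerivAt_id (t : ℂ)).const_mul (I * β i)).cexp.comp_ofReal).mul_const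
        (a i)).congr_deriv (by simp only [id, mul_one]; ring)
  have hnorm : ∀ i (t : ℝ), ‖I * β i * a i * exp (I * β i * t)‖ = |β i| * ‖a i‖ := by
    intro i t
    rw [norm_mul, norm_exp_I_mul_ofReal_mul, mul_one]
    simp
  simp_rw [← hterm]
  refine (intervalIntegral.hasSum_integral_of_dominated_convergence (fun i _ => |β i| * ‖a i‖)
    (fun i => by fun_prop) (fun i => ?_) ?_ intervalIntegrable_const ?_).tsum_eq
  · exact .of_forall fun t _ => (hnorm i t).le
  · exact .of_forall fun _ _ => h
  · exact .of_forall fun t _ => (h.of_norm_bounded fun i => (hnorm i t).le).hasSum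

lemma cconj_eS (t : ℝ) (c : ℤ → ℂ) : cconj (eS t c) = eS (-t) (cconj c) := by
  ext k
  simp [cconj, eS, ← exp_conj]

lemma cconj_dx (c : ℤ → ℂ) : cconj (dx c) = dx (cconj c) := by
  ext k
  simp [cconj, dx]

lemma dx_eS (t : ℝ) (c : ℤ → ℂ) : dx (eS t c) = eS t (dx c) := by
  ext k
  simp only [dx, eS]
  ring

lemma pc_comm (a b : ℤ → ℂ) : pc a b = pc b a := by
  ext k
  rw [pc, ← (Equiv.subLeft k).tsum_eq]
  simp [pc, mul_comm]

noncomputable def resonance (k j : ℤ) : ℝ := 2 * k * (k - j)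

lemma abs_resonance_le (k j : ℤ) :
    |resonance k j| ≤ 4 * (1 + (k : ℝ) ^ 2) * (1 + (j : ℝ) ^ 2) := by
  rw [resonance, abs_mul, abs_mul, abs_two]
  nlinarith [sq_nonneg (|(k : ℝ)| - |(k : ℝ) - j|), sq_abs (k : ℝ), sq_abs ((k : ℝ) - j),
    sq_nonneg (k * j : ℝ)]

lemma pc_eS_eS_neg (t : ℝ) (a b : ℤ → ℂ) (k : ℤ) :
    pc (eS t a) (eS (-t) b) k =
      exp (-I * t * (k : ℝ) ^ 2) * ∑' j, exp (I * resonance k j * t) * (a j * b (k - j)) := by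
  rw [pc, ← tsum_mul_left]
  refine tsum_congr fun j => ?_
  simp only [eS, resonance]
  rw [mul_mul_mul_comm, ← exp_add]
  conv_rhs => rw [← mul_assoc, ← exp_add]
  congr 2
  push_cast
  ring

lemma jap_sq (x : ℝ) : jap x ^ 2 = 1 + x ^ 2 :=
  Real.sq_sqrt (by positivity)

lemma Regular.summable_one_add_sq_mul_norm_mul_cconj {w : ℤ → ℂ} (hw : Regular w) (k : ℤ) :
    Summable fun j : ℤ => (1 + (j : ℝ) ^ 2) * ‖w j * cconj w (k - j)‖ := by
  have h0 : Summable fun j => ‖w j‖ := by simpa using hw 0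
  have h2 : Summable fun j : ℤ => (1 + (j : ℝ) ^ 2) * ‖w j‖ := by
    simpa [jap_sq] using hw 2
  refine (h2.mul_right (∑' i, ‖w i‖)).of_nonneg_of_le (fun j => by positivity) fun j => ?_
  rw [norm_mul, cconj, RCLike.norm_conj, ← mul_assoc]
  gcongr
  exact h0.le_tsum _ fun _ _ => norm_nonneg _

section
variable {a b : ℤ → ℂ} {k : ℤ}

lemma pc_eS_sub_exp_mul_pc (h : Summable fun j : ℤ => (1 + (j : ℝ) ^ 2) * ‖a j * b (k - j)‖)
    (s : ℝ) :
    pc (eS s a) (eS (-s) b) k - exp (-I * s * (k : ℝ) ^ 2) * pc a b k =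
      exp (-I * s * (k : ℝ) ^ 2) *
        ∑' j, (exp (I * resonance k j * s) - 1) * (a j * b (k - j)) := by
  have hab : Summable fun j => a j * b (k - j) :=
    h.of_norm_bounded fun j =>
      le_mul_of_one_le_left (norm_nonneg _) (le_add_of_nonneg_right (sq_nonneg _))
  have hexp : Summable fun j => exp (I * resonance k j * s) * (a j * b (k - j)) :=
    hab.norm.of_norm_bounded fun j => by rw [norm_mul, norm_exp_I_mul_ofReal_mul, one_mul]
  simp_rw [pc_eS_eS_neg, sub_mul, one_mul]
  rw [hexp.tsum_sub hab, mul_sub, pc]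

lemma pc_eS_dx2_add_pc_eS_dx (h : Summable fun j : ℤ => (1 + (j : ℝ) ^ 2) * ‖a j * b (k - j)‖)
    (t : ℝ) :
    (-2 * I) * (pc (eS t a) (eS (-t) (dx2 b)) k + pc (eS t (dx a)) (eS (-t) (dx b)) k) =
      exp (-I * t * (k : ℝ) ^ 2) *
        ∑' j, I * resonance k j * (a j * b (k - j)) * exp (I * resonance k j * t) := by
  have hdx2 : Summable fun j => exp (I * resonance k j * t) * (a j * dx2 b (k - j)) := by
    refine (h.mul_left (2 * (1 + (k : ℝ) ^ 2))).of_norm_bounded fun j => ?_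
    rw [norm_mul, norm_exp_I_mul_ofReal_mul, one_mul, dx2, mul_left_comm, norm_mul, norm_pow,
      norm_mul, Complex.norm_I, one_mul, Complex.norm_intCast, sq_abs, ← mul_assoc]
    gcongr ?_ * _
    push_cast
    nlinarith [sq_nonneg (k + j : ℝ), sq_nonneg (k * j : ℝ)]
  have hdx : Summable fun j => exp (I * resonance k j * t) * (dx a j * dx b (k - j)) := by
    refine (h.mul_left (2 * (1 + (k : ℝ) ^ 2))).of_norm_bounded fun j => ?_
    rw [norm_mul, norm_exp_I_mul_ofReal_mul, one_mul, dx, dx, mul_mul_mul_comm]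
    simp only [norm_mul, Complex.norm_I, Complex.norm_intCast, one_mul]
    rw [← mul_assoc (2 * _)]
    gcongr ?_ * _
    push_cast
    nlinarith [sq_nonneg (|(j : ℝ)| - |(k : ℝ) - j|), sq_abs (j : ℝ), sq_abs ((k : ℝ) - j),
      sq_nonneg (k * j : ℝ)]
  rw [pc_eS_eS_neg, pc_eS_eS_neg, ← mul_add, ← hdx2.tsum_add hdx, mul_left_comm, ← tsum_mul_left]
  congr 1
  refine tsum_congr fun j => ?_
  simp only [dx, dx2, resonance]
  push_cast
  linear_combination
    (-2 * I * k * (k - j) * exp (I * (2 * k * (k - j)) * t) * a j * b (k - j)) * I_sq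

end

/-- **Commutator identity for the modulus squared under the Schrödinger flow:** for
sufficiently regular `w` on `𝕋` and `s ∈ ℝ`, mode by mode,
`|e^{is∂ₓ²}w|² - e^{is∂ₓ²}(|w|²)
  = -2i ∫₀^s e^{i(s-s₁)∂ₓ²}[(e^{-is₁∂ₓ²}∂ₓ²w̄)(e^{is₁∂ₓ²}w) + |e^{is₁∂ₓ²}∂ₓw|²] ds₁`. -/
theorem modulus_square_commutator_identity (w : ℤ → ℂ) (hw : Regular w) (s : ℝ) :
    ∀ k : ℤ,
      pc (eS s w) (cconj (eS s w)) k -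
          Complex.exp (-(Complex.I) * s * (k : ℝ) ^ 2) * pc w (cconj w) k =
        (-2 * Complex.I) *
          ∫ s1 in (0 : ℝ)..s,
            Complex.exp (-(Complex.I) * (s - s1) * (k : ℝ) ^ 2) *
              (pc (eS (-s1) (dx2 (cconj w))) (eS s1 w) k +
                pc (dx (eS s1 w)) (cconj (dx (eS s1 w))) k) := by
  intro k
  have hc := hw.summable_one_add_sq_mul_norm_mul_cconj k
  have hres : Summable fun j => |resonance k j| * ‖w j * cconj w (k - j)‖ :=
    (hc.mul_left (4 * (1 + (k : ℝ) ^ 2))).of_nonneg_of_le (fun j => by positivity)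
      fun j => by rw [← mul_assoc]; gcongr; exact abs_resonance_le k j
  have hflow (t : ℝ) : exp (-I * (s - t) * (k : ℝ) ^ 2) * exp (-I * t * (k : ℝ) ^ 2) =
      exp (-I * s * (k : ℝ) ^ 2) := by
    rw [← exp_add]; ring_nf
  rw [cconj_eS, pc_eS_sub_exp_mul_pc hc, tsum_exp_sub_one_mul_eq_integral_tsum _ _ hres,
    ← intervalIntegral.integral_const_mul, ← intervalIntegral.integral_const_mul]
  refine intervalIntegral.integral_congr fun t _ => ?_
  rw [pc_comm (eS (-t) _), dx_eS, cconj_eS, cconj_dx, mul_left_comm,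
    pc_eS_dx2_add_pc_eS_dx hc, ← mul_assoc, hflow]
end
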